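/- arXiv:1903.11200 — 3 statements merged into one kernel-verified Lean document; each statement's English description precedes it below -/
import Mathlib

section
/- Suppose f0 and f are probability densities on ℝ and for every t > 0 the set {x : f(x) < t·f0(x)} has positive Lebesgue measure (i.e., essinf f/f0 = 0). Then the mixture representation is identifiable: if (1-p)f0 + p f = (1-q)f0 + q h almost everywhere for p, q ∈ [0,1] and probability densities f, h both satisfying essinf(·/f0) = 0, then p = q, and if p > 0 then f = h almost everywhere. -/
open MeasureTheory Filter Set

/-- Identifiability of the two-component mixture when `essinf f/f0 = 0` and
`essinf h/f0 = 0`: if `(1-p)f0 + p f = (1-q)f0 + q h` a.e., then `p = q`,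
and if `p > 0` then `f = h` a.e. -/
theorem stmt1 (f0 f h : ℝ → ℝ) (p q : ℝ)
    (hf0m : Measurable f0) (hfm : Measurable f) (hhm : Measurable h)
    (hf0 : ∀ x, 0 ≤ f0 x) (hf : ∀ x, 0 ≤ f x) (hh : ∀ x, 0 ≤ h x)
    (hif0 : ∫ x, f0 x = 1) (hif : ∫ x, f x = 1) (hih : ∫ x, h x = 1)
    (hp : p ∈ Set.Icc (0:ℝ) 1) (hq : q ∈ Set.Icc (0:ℝ) 1)
    (hessf : ∀ t : ℝ, 0 < t → 0 < volume {x | f x < t * f0 x})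
    (hessh : ∀ t : ℝ, 0 < t → 0 < volume {x | h x < t * f0 x})
    (hmix : ∀ᵐ x ∂volume, (1 - p) * f0 x + p * f x = (1 - q) * f0 x + q * h x) :
    p = q ∧ (0 < p → f =ᵐ[volume] h) := by
  have key : p = q := by
    by_contra hne
    rcases lt_or_gt_of_ne hne with hlt | hgt
    · have hq0 : 0 < q := lt_of_le_of_lt hp.1 hlt
      have ht : 0 < (q - p) / q := div_pos (sub_pos.2 hlt) hq0
      have hnull : volume {x | h x < (q - p) / q * f0 x} = 0 := by
        have hae : ∀ᵐ x ∂volume, ¬ (h x < (q - p) / q * f0 x) := by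
          filter_upwards [hmix] with x hx hcon
          have h1 : (q - p) / q * f0 x * q = (q - p) * f0 x := by
            field_simp
          have h2 : q * h x < (q - p) * f0 x := by
            nlinarith [mul_lt_mul_of_pos_right hcon hq0]
          nlinarith [mul_nonneg hp.1 (hf x)]
        rw [ae_iff] at hae
        simpa using hae
      exact (hessh _ ht).ne' hnull
    · have hp0 : 0 < p := lt_of_le_of_lt hq.1 hgt
      have ht : 0 < (p - q) / p := div_pos (sub_pos.2 hgt) hp0
      have hnull : volume {x | f x < (p - q) / p * f0 x} = 0 := by
        have hae : ∀ᵐ x ∂volume, ¬ (f x < (p - q) / p * f0 x) := by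
          filter_upwards [hmix] with x hx hcon
          have h1 : (p - q) / p * f0 x * p = (p - q) * f0 x := by
            field_simp
          have h2 : p * f x < (p - q) * f0 x := by
            nlinarith [mul_lt_mul_of_pos_right hcon hp0]
          nlinarith [mul_nonneg hq.1 (hh x)]
        rw [ae_iff] at hae
        simpa using hae
      exact (hessf _ ht).ne' hnull
  refine ⟨key, fun hp0 => ?_⟩
  filter_upwards [hmix] with x hx
  have : p * f x = p * h x := by rw [key] at hx ⊢; linarith
  exact mul_left_cancel₀ hp0.ne' this
end

section
/- For any concave upper semicontinuous coercive function φ on ℝ^d with max φ = M and any α > 0 and t = -αM (M > 0), the Lebesgue measure of the superlevel set D = {x : φ(x) ≥ -αM} satisfies Leb(D) ≤ (1+α)^d M^d e^{-M} / ∫_0^{(1+α)M} t^d e^{-t} dt, provided ∫ e^{φ} dx = 1; in particular Leb(D) → 0 as M → ∞ for fixed α. -/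
/-!
Let `f(x₀) = e^M` and `D = {f ≥ e^{M - C}}` with `C = (1 + α) M`. For `0 < t ≤ C`, log-concavity
maps the homothetic copy of `D` with centre `x₀` and ratio `t / C` into `{f ≥ e^{M - t}}`, so
`|{f ≥ e^{M - t}}| ≥ (t / C)^d |D|`. Substituting `s = e^{M - t}` in the layer-cake formula
`1 = ∫ f = ∫_0^∞ |{f ≥ s}| ds` and keeping only `t ∈ (0, C]` gives
`1 ≥ |D| e^M C^{-d} ∫_0^C t^d e^{-t} dt`.
-/

open MeasureTheory Filter Set Real Module
open scoped Pointwise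

theorem smul_vadd_superlevel_subset {E : Type*} [AddCommGroup E] [Module ℝ E] {f : E → ℝ}
    (hlc : ∀ x y : E, ∀ t : ℝ, 0 ≤ t → t ≤ 1 →
      f x ^ t * f y ^ (1 - t) ≤ f (t • x + (1 - t) • y))
    {a : ℝ} (ha : 0 ≤ a) {x₀ : E} (hx₀ : 0 ≤ f x₀) {t : ℝ} (ht₀ : 0 ≤ t) (ht₁ : t ≤ 1) :
    (1 - t) • x₀ +ᵥ t • {x | a ≤ f x} ⊆ {x | a ^ t * f x₀ ^ (1 - t) ≤ f x} := by
  rintro _ ⟨_, ⟨y, hy, rfl⟩, rfl⟩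
  calc a ^ t * f x₀ ^ (1 - t) ≤ f y ^ t * f x₀ ^ (1 - t) := by gcongr; exact hy
    _ ≤ f (t • y + (1 - t) • x₀) := hlc y x₀ t ht₀ ht₁
    _ = f ((1 - t) • x₀ +ᵥ t • y) := by rw [vadd_eq_add, add_comm]

theorem addHaar_superlevel_le_of_logConcave {E : Type*} [NormedAddCommGroup E] [NormedSpace ℝ E]
    [MeasurableSpace E] [BorelSpace E] [FiniteDimensional ℝ E] (μ : Measure E)
    [μ.IsAddHaarMeasure] {f : E → ℝ}
    (hlc : ∀ x y : E, ∀ t : ℝ, 0 ≤ t → t ≤ 1 →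
      f x ^ t * f y ^ (1 - t) ≤ f (t • x + (1 - t) • y))
    {a : ℝ} (ha : 0 ≤ a) {x₀ : E} (hx₀ : 0 ≤ f x₀) {t : ℝ} (ht₀ : 0 ≤ t) (ht₁ : t ≤ 1) :
    ENNReal.ofReal (t ^ finrank ℝ E) * μ {x | a ≤ f x} ≤
      μ {x | a ^ t * f x₀ ^ (1 - t) ≤ f x} := by
  rw [← Measure.addHaar_smul_of_nonneg μ ht₀, ← measure_vadd μ ((1 - t) • x₀)]
  exact measure_mono (smul_vadd_superlevel_subset hlc ha hx₀ ht₀ ht₁)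

theorem lintegral_exp_sub_mul_measure_superlevel {α : Type*} [MeasurableSpace α]
    (μ : Measure α) {f : α → ℝ} (hf : 0 ≤ᵐ[μ] f) (hfm : AEMeasurable f μ) (M : ℝ) :
    ∫⁻ t, ENNReal.ofReal (exp (M - t)) * μ {x | exp (M - t) ≤ f x} =
      ∫⁻ x, ENNReal.ofReal (f x) ∂μ := by
  have himage : (fun t => exp (M - t)) '' univ = Ioi 0 := by
    rw [image_univ, ← range_exp]
    exact (Function.LeftInverse.surjective (g := fun s => M - s) (fun s => by ring)).range_comp exp
  have hderiv : ∀ t ∈ univ, HasDerivWithinAt (fun t => exp (M - t)) (-exp (M - t)) univ t :=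
    fun t _ => by simpa using ((hasDerivAt_id t).const_sub M).exp
  have hinj : InjOn (fun t => exp (M - t)) univ := fun s _ t _ h => by
    simpa using exp_injective h
  rw [lintegral_eq_lintegral_meas_le μ hf hfm, ← himage,
    lintegral_image_eq_lintegral_abs_deriv_mul MeasurableSet.univ hderiv hinj, Measure.restrict_univ]
  simp only [abs_neg, abs_of_pos (exp_pos _)]

theorem integral_Ioc_pow_mul_exp_neg_pos (n : ℕ) {C : ℝ} (hC : 0 < C) :
    0 < ∫ t in Ioc 0 C, t ^ n * exp (-t) := by
  rw [← intervalIntegral.integral_of_le hC.le]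
  refine intervalIntegral.intervalIntegral_pos_of_pos_on
    (Continuous.intervalIntegrable (by fun_prop) _ _) (fun t ht => ?_) hC
  have := ht.1
  positivity

theorem ofReal_mul_addHaar_superlevel_le_lintegral {E : Type*} [NormedAddCommGroup E]
    [NormedSpace ℝ E] [MeasurableSpace E] [BorelSpace E] [FiniteDimensional ℝ E]
    (μ : Measure E) [μ.IsAddHaarMeasure] {f : E → ℝ}
    (hlc : ∀ x y : E, ∀ t : ℝ, 0 ≤ t → t ≤ 1 →
      f x ^ t * f y ^ (1 - t) ≤ f (t • x + (1 - t) • y))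
    (hf : ∀ x, 0 ≤ f x) (hfm : Measurable f) {x₀ : E} {M C : ℝ} (hx₀ : f x₀ = exp M)
    (hC : 0 < C) :
    ENNReal.ofReal (exp M / C ^ finrank ℝ E * ∫ t in Ioc 0 C, t ^ finrank ℝ E * exp (-t)) *
        μ {x | exp (M - C) ≤ f x} ≤ ∫⁻ x, ENNReal.ofReal (f x) ∂μ := by
  set n := finrank ℝ E
  set V := μ {x | exp (M - C) ≤ f x}
  have hscale : ∀ t ∈ Ioc 0 C,
      ENNReal.ofReal ((t / C) ^ n) * V ≤ μ {x | exp (M - t) ≤ f x} := by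
    intro t ht
    have hexp : exp (M - t) = exp (M - C) ^ (t / C) * f x₀ ^ (1 - t / C) := by
      rw [hx₀, ← exp_mul, ← exp_mul, ← exp_add]
      congr 1
      field_simp
      ring
    rw [hexp]
    exact addHaar_superlevel_le_of_logConcave μ hlc (exp_pos _).le (hf x₀)
      (div_nonneg ht.1.le hC.le) ((div_le_one hC).2 ht.2)
  calc ENNReal.ofReal (exp M / C ^ n * ∫ t in Ioc 0 C, t ^ n * exp (-t)) * V
      = (∫⁻ t in Ioc 0 C, ENNReal.ofReal (exp M / C ^ n * (t ^ n * exp (-t)))) * V := by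
        rw [← integral_const_mul, ofReal_integral_eq_lintegral_ofReal
          (Continuous.integrableOn_Ioc (by fun_prop))]
        refine (ae_restrict_iff' measurableSet_Ioc).2 (ae_of_all _ fun t ht => ?_)
        have := ht.1
        positivity
    _ = ∫⁻ t in Ioc 0 C, ENNReal.ofReal (exp (M - t)) * (ENNReal.ofReal ((t / C) ^ n) * V) := by
        rw [← lintegral_mul_const _ (by fun_prop)]
        refine setLIntegral_congr_fun measurableSet_Ioc fun t ht => ?_
        rw [← mul_assoc (ENNReal.ofReal _), ← ENNReal.ofReal_mul (exp_pos _).le, div_pow,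
          sub_eq_add_neg, exp_add]
        ring_nf
    _ ≤ ∫⁻ t in Ioc 0 C, ENNReal.ofReal (exp (M - t)) * μ {x | exp (M - t) ≤ f x} :=
        setLIntegral_mono' measurableSet_Ioc fun t ht => by gcongr; exact hscale t ht
    _ ≤ ∫⁻ t, ENNReal.ofReal (exp (M - t)) * μ {x | exp (M - t) ≤ f x} :=
        setLIntegral_le_lintegral _ _
    _ = ∫⁻ x, ENNReal.ofReal (f x) ∂μ :=
        lintegral_exp_sub_mul_measure_superlevel μ (ae_of_all _ hf) hfm.aemeasurable M

theorem stmt11_general (d : ℕ) (f : (Fin d → ℝ) → ℝ) (M α : ℝ)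
    (hmeas : Measurable f) (hnonneg : ∀ x, 0 ≤ f x)
    (hlc : ∀ x y : Fin d → ℝ, ∀ t : ℝ, 0 ≤ t → t ≤ 1 →
      f x ^ t * f y ^ (1 - t) ≤ f (t • x + (1 - t) • y))
    (hint : ∫ x, f x = 1)
    (hM : 0 < M) (hattain : ∃ x, f x = Real.exp M)
    (hα : 0 < α) :
    volume {x | Real.exp (-(α * M)) ≤ f x} ≤
      ENNReal.ofReal ((1 + α) ^ d * M ^ d * Real.exp (-M) /
        ∫ t in Set.Ioc (0 : ℝ) ((1 + α) * M), t ^ d * Real.exp (-t)) := by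
  obtain ⟨x₀, hx₀⟩ := hattain
  set I := ∫ t in Ioc 0 ((1 + α) * M), t ^ d * exp (-t)
  have hC : 0 < (1 + α) * M := by positivity
  have hI : 0 < I := integral_Ioc_pow_mul_exp_neg_pos d hC
  have hmass : ∫⁻ x, ENNReal.ofReal (f x) = 1 := by
    rw [← ofReal_integral_eq_lintegral_ofReal (integrable_of_integral_eq_one hint)
      (ae_of_all _ hnonneg), hint, ENNReal.ofReal_one]
  have key := ofReal_mul_addHaar_superlevel_le_lintegral volume hlc hnonneg hmeas hx₀ hC
  rw [finrank_fin_fun, hmass, show M - (1 + α) * M = -(α * M) by ring] at key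
  have hbound : (1 + α) ^ d * M ^ d * exp (-M) / I = (exp M / ((1 + α) * M) ^ d * I)⁻¹ := by
    rw [← mul_pow, exp_neg]
    field_simp
  rw [hbound, ENNReal.ofReal_inv_of_pos (by positivity), ENNReal.le_inv_iff_mul_le, mul_comm]
  exact key

/-- Dümbgen–Samworth–Schuhmacher Lemma 4.1: for a log-concave probability density
`f = e^φ` on ℝ^d with maximum `e^M`, `M > 0`, and any `α > 0`, the superlevel set
`D = {x | φ(x) ≥ -αM}` satisfies
`Leb(D) ≤ (1+α)^d M^d e^{-M} / ∫_0^{(1+α)M} t^d e^{-t} dt`. -/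
theorem stmt11 (d : ℕ) (hd : 0 < d) (f : (Fin d → ℝ) → ℝ) (M α : ℝ)
    (hmeas : Measurable f) (hnonneg : ∀ x, 0 ≤ f x)
    (husc : UpperSemicontinuous f)
    (hlc : ∀ x y : Fin d → ℝ, ∀ t : ℝ, 0 ≤ t → t ≤ 1 →
      f x ^ t * f y ^ (1 - t) ≤ f (t • x + (1 - t) • y))
    (hcoer : Tendsto f (Filter.cocompact (Fin d → ℝ)) (nhds 0))
    (hint : ∫ x, f x = 1)
    (hM : 0 < M) (hmax : ∀ x, f x ≤ Real.exp M) (hattain : ∃ x, f x = Real.exp M)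
    (hα : 0 < α) :
    volume {x | Real.exp (-(α * M)) ≤ f x} ≤
      ENNReal.ofReal ((1 + α) ^ d * M ^ d * Real.exp (-M) /
        ∫ t in Set.Ioc (0 : ℝ) ((1 + α) * M), t ^ d * Real.exp (-t)) :=
  stmt11_general d f M α hmeas hnonneg hlc hint hM hattain hα
end

section
/- Pointwise lower bound for concave functions from the likelihood: let φ be concave on ℝ^d with max φ = M, let x0 be a point which is not an interior point of {φ ≥ φ(x0)} whenever φ(x0) < M, and let Q be a probability measure. If h(Q, x0) = sup{Q(C) : C ⊆ ℝ^d closed convex with x0 ∉ interior(C)} < 1, then ∫ φ dQ ≤ φ(x0)(1 - h(Q,x0)) + max(M,0). -/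
open MeasureTheory Set

/- With `S = {φ ≥ φ(x0)}` one has pointwise `φ ≤ φ(x0) + (M - φ(x0)) 𝟙_S`, so
`∫ φ dQ ≤ φ(x0) + (M - φ(x0)) Q(S)`. When `φ(x0) < M`, the set `S` is closed and convex with
`x0` outside its interior, hence `Q(S) ≤ h`; when `φ(x0) = M` the second term vanishes anyway.
Finally `M h ≤ max(M, 0)` because `0 ≤ h ≤ 1`. -/

theorem integral_le_add_mul_measureReal_le {α : Type*} [MeasurableSpace α] {μ : Measure α}
    [IsProbabilityMeasure μ] {f : α → ℝ} {M t : ℝ} (hf : Integrable f μ) (hM : ∀ x, f x ≤ M)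
    (hs : MeasurableSet {x | t ≤ f x}) :
    ∫ x, f x ∂μ ≤ t + (M - t) * μ.real {x | t ≤ f x} := by
  have hbound : ∀ x, f x ≤ t + {x | t ≤ f x}.indicator (fun _ => M - t) x := by
    intro x
    by_cases hx : t ≤ f x
    · simp [indicator_of_mem (show x ∈ {x | t ≤ f x} from hx), hM x]
    · simp [indicator_of_notMem (show x ∉ {x | t ≤ f x} from hx), (not_le.mp hx).le]
  calc ∫ x, f x ∂μ
      ≤ ∫ x, (t + {x | t ≤ f x}.indicator (fun _ => M - t) x) ∂μ :=
        integral_mono hf ((integrable_const t).add ((integrable_const _).indicator hs)) hbound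
    _ = t + (M - t) * μ.real {x | t ≤ f x} := by
        rw [integral_add (integrable_const t) ((integrable_const _).indicator hs),
          integral_indicator_const _ hs]
        simp [mul_comm]

theorem ConcaveOn.isClosed_setOf_le {E : Type*} [NormedAddCommGroup E] [NormedSpace ℝ E]
    [FiniteDimensional ℝ E] {φ : E → ℝ} (hφ : ConcaveOn ℝ univ φ) (t : ℝ) :
    IsClosed {x | t ≤ φ x} :=
  isClosed_le continuous_const (continuousOn_univ.mp (hφ.continuousOn isOpen_univ))

theorem ConcaveOn.convex_setOf_le {E : Type*} [AddCommGroup E] [Module ℝ E] {φ : E → ℝ}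
    (hφ : ConcaveOn ℝ univ φ) (t : ℝ) : Convex ℝ {x | t ≤ φ x} := by
  simpa only [mem_univ, true_and, ofPred_mem_eq] using hφ.convex_ge t

theorem mul_le_max_zero_of_nonneg_of_le_one {M h : ℝ} (hh0 : 0 ≤ h) (hh1 : h ≤ 1) : M * h ≤ max M 0 := by
  rcases le_total 0 M with hM | hM
  · exact (mul_le_of_le_one_right hM hh1).trans (le_max_left M 0)
  · exact (mul_nonpos_of_nonpos_of_nonneg hM hh0).trans (le_max_right M 0)

theorem stmt14_general (d : ℕ) (φ : (Fin d → ℝ) → ℝ) (M : ℝ) (x0 : Fin d → ℝ)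
    (Q : Measure (Fin d → ℝ)) [IsProbabilityMeasure Q]
    (hconc : ConcaveOn ℝ Set.univ φ)
    (hmax : ∀ x, φ x ≤ M)
    (hx0 : φ x0 < M → x0 ∉ interior {x | φ x0 ≤ φ x})
    (h : ℝ) (hh0 : 0 ≤ h) (hh1 : h < 1)
    (hhQ : ∀ C : Set (Fin d → ℝ), IsClosed C → Convex ℝ C → x0 ∉ interior C →
      (Q C).toReal ≤ h)
    (hint : Integrable φ Q) :
    ∫ x, φ x ∂Q ≤ φ x0 * (1 - h) + max M 0 := by
  set S := {x | φ x0 ≤ φ x}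
  have hS_closed : IsClosed S := hconc.isClosed_setOf_le (φ x0)
  have hsplit : ∫ x, φ x ∂Q ≤ φ x0 + (M - φ x0) * Q.real S :=
    integral_le_add_mul_measureReal_le hint hmax hS_closed.measurableSet
  have hmass : (M - φ x0) * Q.real S ≤ (M - φ x0) * h := by
    rcases (hmax x0).lt_or_eq with hlt | heq
    · exact mul_le_mul_of_nonneg_left
        (hhQ S hS_closed (hconc.convex_setOf_le (φ x0)) (hx0 hlt)) (sub_nonneg.mpr hlt.le)
    · simp [heq]
  linarith [mul_le_max_zero_of_nonneg_of_le_one (M := M) hh0 hh1.le]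

/-- Pointwise lower bound for concave functions from the likelihood: if `φ` is concave
with maximum `M`, `x0` is not interior to the superlevel set `{φ ≥ φ(x0)}` when
`φ(x0) < M`, and `h ≥ Q(C)` for every closed convex `C` with `x0 ∉ interior C`,
with `0 ≤ h < 1`, then `∫ φ dQ ≤ φ(x0)(1-h) + max(M,0)`. -/
theorem stmt14 (d : ℕ) (φ : (Fin d → ℝ) → ℝ) (M : ℝ) (x0 : Fin d → ℝ)
    (Q : Measure (Fin d → ℝ)) [IsProbabilityMeasure Q]
    (hconc : ConcaveOn ℝ Set.univ φ)
    (hmax : ∀ x, φ x ≤ M) (hattain : ∃ x, φ x = M)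
    (hx0 : φ x0 < M → x0 ∉ interior {x | φ x0 ≤ φ x})
    (h : ℝ) (hh0 : 0 ≤ h) (hh1 : h < 1)
    (hhQ : ∀ C : Set (Fin d → ℝ), IsClosed C → Convex ℝ C → x0 ∉ interior C →
      (Q C).toReal ≤ h)
    (hint : Integrable φ Q) :
    ∫ x, φ x ∂Q ≤ φ x0 * (1 - h) + max M 0 :=
  stmt14_general d φ M x0 Q hconc hmax hx0 h hh0 hh1 hhQ hint
end
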